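/- In a vertex operator algebra V, for homogeneous v ∈ V of weight wt(v) ∈ ℤ and any k ∈ ℤ, the identity Σ_{j≥0} C(k + wt(v) - 1, j) v(j) = Σ_{m≥0} (k^m/m!) v[m] holds as operators on V, where v[m] are the square bracket modes defined by Y[v,z] = Y(e^{z L(0)} v, e^z - 1) = Σ_{n∈ℤ} v[n] z^{-n-1}. -/

import Mathlib

/-- The binomial coefficient `C(x,j)` for `x ∈ ℤ`, `j ∈ ℕ`, as a complex number. -/
noncomputable def cchoose (m : ℤ) (j : ℕ) : ℂ :=
  (∏ i ∈ Finset.range j, ((m : ℂ) - i)) / (Nat.factorial j)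

/-- The power series of `e^{cz}`. -/
noncomputable def expPS (c : ℂ) : PowerSeries ℂ :=
  PowerSeries.mk fun n => c ^ n / (Nat.factorial n)

/-- The power series of `z/(e^z - 1) = ∑ B_n z^n/n!`. -/
noncomputable def bernPS : PowerSeries ℂ :=
  PowerSeries.mk fun n => ((bernoulli n : ℚ) : ℂ) / (Nat.factorial n)

/-- `sqCoeff c j n` is the coefficient of `z^{-n-1}` in the Laurent expansion of
`e^{zc}(e^z-1)^{-j-1}`, i.e. the coefficient of `z^{j-n}` in `e^{zc}(z/(e^z-1))^{j+1}`.
For `v` homogeneous of weight `h`, the square bracket modes of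
`Y[v,z] = Y(e^{zL(0)}v, e^z-1) = ∑_n v[n]z^{-n-1}` are `v[n] = ∑_j sqCoeff h j n · v(j)`. -/
noncomputable def sqCoeff (c : ℂ) (j : ℕ) (n : ℤ) : ℂ :=
  if 0 ≤ (j : ℤ) - n then
    PowerSeries.coeff ((j : ℤ) - n).toNat (expPS c * bernPS ^ (j + 1))
  else 0

/-!
With `B = z/(e^z - 1)` and `E_c = e^{cz}`, the square bracket modes give
`∑_m (k^m/m!) v[m] = ∑_j [z^j](E_{k+h} B^{j+1}) · v(j)`, so everything reduces to the
power series identity `[z^j](E_c B^{j+1}) = C(c-1, j)` for `c ∈ ℤ` (a residue computation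
after the substitution `w = e^z - 1`). Both sides satisfy Pascal's rule in `(c, j)`, since
`B (E_1 - 1) = z`, and equal `1` at `j = 0`. At `c = 1` the left side vanishes for `j ≥ 1`,
because `z B' = B - E_1 B^2` exhibits `E_1 B^{j+1}` as `B^j - (z/j) (B^j)'`, whose
`z^j`-coefficient is zero.
-/

open PowerSeries

lemma cchoose_zero_right (m : ℤ) : cchoose m 0 = 1 := by simp [cchoose]

lemma cchoose_zero_succ (j : ℕ) : cchoose 0 (j + 1) = 0 := by
  simp [cchoose, Finset.prod_range_succ']

lemma cchoose_succ_succ (m : ℤ) (j : ℕ) :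
    cchoose (m + 1) (j + 1) = cchoose m (j + 1) + cchoose m j := by
  have hshift : ∏ i ∈ Finset.range j, (((m + 1 : ℤ) : ℂ) - ((i + 1 : ℕ) : ℂ))
      = ∏ i ∈ Finset.range j, ((m : ℂ) - i) :=
    Finset.prod_congr rfl fun i _ => by push_cast; ring
  have hj : (j.factorial : ℂ) ≠ 0 := by exact_mod_cast j.factorial_ne_zero
  have hj1 : ((j : ℂ) + 1) ≠ 0 := by exact_mod_cast j.succ_ne_zero
  rw [cchoose, cchoose, cchoose, Finset.prod_range_succ', hshift, Finset.prod_range_succ,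
    Nat.factorial_succ]
  push_cast
  field_simp
  ring

lemma eq_of_pascal {G : Type*} [AddCommGroup G] {f g : ℤ → ℕ → G}
    (hf : ∀ c j, f (c + 1) (j + 1) = f c (j + 1) + f c j)
    (hg : ∀ c j, g (c + 1) (j + 1) = g c (j + 1) + g c j)
    (hzero : ∀ c, f c 0 = g c 0) (c₀ : ℤ) (hrow : ∀ j, f c₀ j = g c₀ j) : f = g := by
  suffices hdiff : ∀ j c, f c j - g c j = 0 by
    ext c j
    exact sub_eq_zero.mp (hdiff j c)
  intro j
  induction j with
  | zero => exact fun c => sub_eq_zero.mpr (hzero c)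
  | succ j ih =>
    have hstep : ∀ c, f (c + 1) (j + 1) - g (c + 1) (j + 1) = f c (j + 1) - g c (j + 1) :=
      fun c => by rw [hf, hg, add_sub_add_comm, ih c, add_zero]
    have hshift : ∀ i : ℤ, f (c₀ + i) (j + 1) - g (c₀ + i) (j + 1) = 0 := by
      intro i
      induction i using Int.induction_on with
      | zero => simpa using sub_eq_zero.mpr (hrow (j + 1))
      | succ i hi => rw [← add_assoc, hstep, hi]
      | pred i hi =>
        have hback := hstep (c₀ + (-i - 1))
        rwa [show c₀ + (-i - 1) + 1 = c₀ + -i by ring, hi, eq_comm] at hback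
    intro c
    simpa using hshift (c - c₀)

lemma bernPS_eq_bernoulliPowerSeries : bernPS = bernoulliPowerSeries ℂ := by
  ext n
  rw [bernPS, bernoulliPowerSeries, coeff_mk, coeff_mk, eq_ratCast (algebraMap ℚ ℂ)]
  push_cast
  ring

lemma expPS_eq_rescale_exp (c : ℂ) : expPS c = rescale c (exp ℂ) := by
  ext n
  rw [expPS, coeff_mk, coeff_rescale, coeff_exp, eq_ratCast (algebraMap ℚ ℂ)]
  push_cast
  ring

lemma expPS_mul_expPS (a b : ℂ) : expPS a * expPS b = expPS (a + b) := by
  rw [expPS_eq_rescale_exp, expPS_eq_rescale_exp, expPS_eq_rescale_exp,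
    exp_mul_exp_eq_exp_add]

lemma bernPS_mul_expPS_one_sub_one : bernPS * (expPS 1 - 1) = X := by
  rw [bernPS_eq_bernoulliPowerSeries, expPS_eq_rescale_exp, rescale_one, RingHom.id_apply,
    bernoulliPowerSeries_mul_exp_sub_one]

lemma derivative_expPS_one : d⁄dX ℂ (expPS 1) = expPS 1 := by
  ext n
  rw [coeff_derivative, expPS, coeff_mk, coeff_mk, one_pow, one_pow, Nat.factorial_succ]
  have hn : (n.factorial : ℂ) ≠ 0 := by exact_mod_cast n.factorial_ne_zero
  have hn1 : ((n : ℂ) + 1) ≠ 0 := by exact_mod_cast n.succ_ne_zero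
  field_simp
  push_cast
  ring

lemma X_mul_derivative_bernPS : X * d⁄dX ℂ bernPS = bernPS - expPS 1 * bernPS ^ 2 := by
  have hBu := bernPS_mul_expPS_one_sub_one
  have hu : expPS 1 - 1 ≠ 0 := right_ne_zero_of_mul (hBu ▸ X_ne_zero)
  have hD := congrArg (d⁄dX ℂ) hBu
  rw [Derivation.leibniz, map_sub, Derivation.map_one_eq_zero, sub_zero,
    derivative_expPS_one, derivative_X, smul_eq_mul, smul_eq_mul] at hD
  refine sub_eq_zero.mp (mul_right_cancel₀ hu ?_)
  linear_combination X * hD + (expPS 1 * bernPS - 1) * hBu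

lemma X_mul_derivative_bernPS_pow (n : ℕ) :
    X * d⁄dX ℂ (bernPS ^ (n + 1))
      = ((n + 1 : ℕ) : ℂ⟦X⟧) * (bernPS ^ (n + 1) - expPS 1 * bernPS ^ (n + 2)) := by
  rw [Derivation.leibniz_pow, Nat.add_sub_cancel, smul_eq_mul, nsmul_eq_mul]
  linear_combination ((n + 1 : ℕ) : ℂ⟦X⟧) * bernPS ^ n * X_mul_derivative_bernPS

lemma coeff_succ_expPS_one_mul_bernPS_pow (n : ℕ) :
    coeff (n + 1) (expPS 1 * bernPS ^ (n + 2)) = 0 := by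
  have h := congrArg (coeff (n + 1)) (X_mul_derivative_bernPS_pow n)
  rw [coeff_succ_X_mul, coeff_derivative, ← map_natCast (C (R := ℂ)), coeff_C_mul,
    map_sub] at h
  have hn : ((n + 1 : ℕ) : ℂ) ≠ 0 := by exact_mod_cast n.succ_ne_zero
  refine mul_left_cancel₀ hn ?_
  push_cast at h ⊢
  linear_combination h

lemma coeff_zero_expPS_mul_bernPS_pow (c : ℂ) (n : ℕ) :
    coeff 0 (expPS c * bernPS ^ n) = 1 := by
  rw [coeff_zero_eq_constantCoeff_apply, map_mul, map_pow]
  simp [expPS, bernPS, constantCoeff_mk]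

lemma coeff_succ_expPS_add_one_mul_bernPS_pow (c : ℂ) (j : ℕ) :
    coeff (j + 1) (expPS (c + 1) * bernPS ^ (j + 2))
      = coeff (j + 1) (expPS c * bernPS ^ (j + 2)) + coeff j (expPS c * bernPS ^ (j + 1)) := by
  have hsplit : expPS (c + 1) * bernPS ^ (j + 2)
      = expPS c * bernPS ^ (j + 2) + X * (expPS c * bernPS ^ (j + 1)) := by
    rw [← expPS_mul_expPS c 1]
    linear_combination (expPS c * bernPS ^ (j + 1)) * bernPS_mul_expPS_one_sub_one
  rw [hsplit, map_add, coeff_succ_X_mul]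

theorem coeff_expPS_mul_bernPS_pow (c : ℤ) (j : ℕ) :
    coeff j (expPS c * bernPS ^ (j + 1)) = cchoose (c - 1) j := by
  have key := eq_of_pascal (f := fun c j => coeff j (expPS (c : ℂ) * bernPS ^ (j + 1)))
    (g := fun c j => cchoose (c - 1) j)
    (fun c j => by push_cast; exact coeff_succ_expPS_add_one_mul_bernPS_pow c j)
    (fun c j => by simpa using cchoose_succ_succ (c - 1) j)
    (fun c => by simp only [coeff_zero_expPS_mul_bernPS_pow, cchoose_zero_right]) 1
    (fun j => by
      cases j with
      | zero => simp only [coeff_zero_expPS_mul_bernPS_pow, cchoose_zero_right]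
      | succ j =>
        show coeff (j + 1) (expPS ((1 : ℤ) : ℂ) * bernPS ^ (j + 2)) = cchoose (1 - 1) (j + 1)
        rw [Int.cast_one, sub_self, coeff_succ_expPS_one_mul_bernPS_pow, cchoose_zero_succ])
  exact congrFun (congrFun key c) j

lemma sum_mul_sqCoeff (a c : ℂ) (j M : ℕ) (hjM : j < M) :
    ∑ m ∈ Finset.range M, a ^ m / m.factorial * sqCoeff c j m
      = coeff j (expPS (a + c) * bernPS ^ (j + 1)) := by
  have hvanish : ∀ m ∈ Finset.range M, m ∉ Finset.range (j + 1) →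
      a ^ m / m.factorial * sqCoeff c j m = 0 := by
    intro m _ hm
    rw [Finset.mem_range] at hm
    rw [sqCoeff, if_neg (by omega), mul_zero]
  have hterm : ∀ m ∈ Finset.range (j + 1), a ^ m / m.factorial * sqCoeff c j m
      = coeff m (expPS a) * coeff (j - m) (expPS c * bernPS ^ (j + 1)) := by
    intro m hm
    rw [Finset.mem_range] at hm
    rw [sqCoeff, if_pos (by omega), show ((j : ℤ) - m).toNat = j - m by omega]
    congr 1
    rw [expPS, coeff_mk]
  rw [← Finset.sum_subset (Finset.range_subset_range.mpr hjM) hvanish,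
    Finset.sum_congr rfl hterm, ← expPS_mul_expPS, mul_assoc, coeff_mul,
    Finset.Nat.sum_antidiagonal_eq_sum_range_succ_mk]

theorem round_to_square_bracket_general {V : Type*} [AddCommGroup V] [Module ℂ V]
    (mode : V → ℤ → Module.End ℂ V)
    (v : V) (h : ℤ) (k : ℤ) :
    ∀ w : V, ∃ N : ℕ, ∀ M : ℕ, N ≤ M →
      ∑ j ∈ Finset.range M, cchoose (k + h - 1) j • mode v j w
        = ∑ m ∈ Finset.range M, ((k : ℂ) ^ m / (Nat.factorial m)) •
            ∑ j ∈ Finset.range M, sqCoeff (h : ℂ) j (m : ℤ) • mode v j w := by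
  intro w
  refine ⟨0, fun M _ => ?_⟩
  simp_rw [Finset.smul_sum, smul_smul]
  rw [Finset.sum_comm]
  refine Finset.sum_congr rfl fun j hj => ?_
  rw [← Finset.sum_smul, sum_mul_sqCoeff _ _ j M (Finset.mem_range.mp hj), ← Int.cast_add,
    coeff_expPS_mul_bernPS_pow]

/-- In a vertex operator algebra, for homogeneous `v` of weight `h ∈ ℤ` and any `k ∈ ℤ`,
`∑_{j≥0} C(k+h-1,j) v(j) = ∑_{m≥0} (k^m/m!) v[m]` as operators on `V` (both sums are
finite on each vector by lower truncation), where `v[m] = ∑_j sqCoeff h j m · v(j)` are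
the square bracket modes of `Y[v,z] = Y(e^{zL(0)}v, e^z-1)`. -/
theorem round_to_square_bracket {V : Type*} [AddCommGroup V] [Module ℂ V]
    (mode : V → ℤ → Module.End ℂ V) (vac ω : V)
    (htrunc : ∀ a b : V, ∃ N : ℕ, ∀ j : ℤ, (N : ℤ) ≤ j → mode a j b = 0)
    (hvac : ∀ (a : V) (n : ℤ), -1 ≤ n → mode a n vac = if n = -1 then a else 0)
    (hcomm : ∀ (a b : V) (m n : ℤ) (v : V), ∃ N : ℕ, ∀ M : ℕ, N ≤ M →
      mode a m (mode b n v) - mode b n (mode a m v)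
        = ∑ j ∈ Finset.range M, cchoose m j • mode (mode a j b) (m + n - j) v)
    (htrans : ∀ (c : V) (n : ℤ), mode (mode ω 0 c) n = (-(n : ℂ)) • mode c (n - 1))
    (v : V) (h : ℤ) (hwt : mode ω 1 v = (h : ℂ) • v) (k : ℤ) :
    ∀ w : V, ∃ N : ℕ, ∀ M : ℕ, N ≤ M →
      ∑ j ∈ Finset.range M, cchoose (k + h - 1) j • mode v j w
        = ∑ m ∈ Finset.range M, ((k : ℂ) ^ m / (Nat.factorial m)) •
            ∑ j ∈ Finset.range M, sqCoeff (h : ℂ) j (m : ℤ) • mode v j w :=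
  round_to_square_bracket_general mode v h k
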